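/- Let F be a Borel probability measure on 𝒳 and A ⊆ 𝒳 measurable with p = F(A) > 0; let F̃ be the zero-variance sampling distribution, i.e., the probability measure with density dF̃/dF = 1_A/p. Let δ' ∈ (0,1) and ε > 0 with (1+ε)δ' < 1, and suppose there exists a measurable C ⊆ A with F(C) = δ'·p. Then inf{ H(G∣F̃) : G a probability measure on 𝒳 such that for some measurable C' ⊆ A with F(C') ≥ δ'·p, dG/dF̃ ≥ 1+ε F̃-almost everywhere on C' } = γ⁺_ε(δ'). In particular this rate does not depend on p. -/

import Mathlib

open MeasureTheory Filter Topology ENNReal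
open scoped Classical

noncomputable section

/-- Relative entropy (Kullback–Leibler divergence) `H(G ∣ μ) = ∫ log(dG/dμ) dG` when `G ≪ μ`
(and the integrand is `G`-integrable), `+∞` otherwise. -/
def KL {X : Type*} [MeasurableSpace X] (G μ : Measure X) : ℝ≥0∞ :=
  if G ≪ μ ∧ Integrable (fun x => Real.log ((G.rnDeriv μ) x).toReal) G then
    ENNReal.ofReal (∫ x, Real.log ((G.rnDeriv μ) x).toReal ∂G)
  else ⊤

/-- `γ⁺_ε(s)` -/
def gammaPlus (ε s : ℝ) : ℝ :=
  (1 + ε) * s * Real.log (1 + ε)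
    + (1 - (1 + ε) * s) * Real.log ((1 - (1 + ε) * s) / (1 - s))

/-- The zero-variance sampling distribution: density `1_A / F(A)` with respect to `F`. -/
def zeroVar {X : Type*} [MeasurableSpace X] (F : Measure X) (A : Set X) : Measure X :=
  F.withDensity (Set.indicator A fun _ => (F A)⁻¹)

/-!
Write `ν = F̃`. For any `G` and measurable `C'`, Jensen's inequality for `klFun` on the two cells
`C'`, `C'ᶜ` bounds `H(G ∣ ν)` below by the binary relative entropy `d(G(C') ∥ ν(C'))`. For an
admissible `G` we have `s = ν(C') ≥ δ'` and `t = G(C') ≥ (1+ε)s`; since `d(· ∥ s)` increases on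
`[s, 1]` and `s ↦ d((1+ε)s ∥ s) = γ⁺_ε(s)` increases, `H(G ∣ ν) ≥ γ⁺_ε(δ')`. The bound is attained
by the density that equals `1+ε` on `C` and `(1-(1+ε)δ')/(1-δ')` off `C`. As `ν(S) = F(S)/F(A)`
for `S ⊆ A`, `p` drops out.
-/

open Real InformationTheory Set

lemma monotoneOn_klFun : MonotoneOn klFun (Ici 1) := by
  refine monotoneOn_of_deriv_nonneg (convex_Ici 1) continuous_klFun.continuousOn ?_ ?_ <;>
    rw [interior_Ici]
  · exact fun x hx =>
      (hasDerivAt_klFun (zero_lt_one.trans hx).ne').differentiableAt.differentiableWithinAt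
  · exact fun x hx => deriv_klFun ▸ log_nonneg hx.le

lemma antitoneOn_klFun : AntitoneOn klFun (Icc 0 1) := by
  refine antitoneOn_of_deriv_nonpos (convex_Icc 0 1) continuous_klFun.continuousOn ?_ ?_ <;>
    rw [interior_Icc]
  · exact fun x hx => (hasDerivAt_klFun hx.1.ne').differentiableAt.differentiableWithinAt
  · exact fun x hx => deriv_klFun ▸ log_nonpos hx.1.le hx.2.le

/-- `d(t ∥ s)`, the relative entropy of Bernoulli(`t`) with respect to Bernoulli(`s`), in
`f`-divergence form. -/
noncomputable def binKL (s t : ℝ) : ℝ :=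
  s * klFun (t / s) + (1 - s) * klFun ((1 - t) / (1 - s))

lemma monotoneOn_binKL {s : ℝ} (hs₀ : 0 < s) (hs₁ : s < 1) : MonotoneOn (binKL s) (Icc s 1) := by
  rintro t ⟨hst, -⟩ t' ⟨-, ht'⟩ htt'
  have hs₁' : 0 < 1 - s := by linarith
  have h₁ : klFun (t / s) ≤ klFun (t' / s) :=
    monotoneOn_klFun ((one_le_div hs₀).2 hst) ((one_le_div hs₀).2 (hst.trans htt'))
      (by gcongr)
  have h₂ : klFun ((1 - t) / (1 - s)) ≤ klFun ((1 - t') / (1 - s)) :=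
    antitoneOn_klFun ⟨by bound, div_le_one_of_le₀ (by linarith) hs₁'.le⟩
      ⟨by bound, div_le_one_of_le₀ (by linarith) hs₁'.le⟩ (by gcongr)
  unfold binKL
  gcongr

lemma binKL_mul_self (c s : ℝ) :
    binKL s (c * s) = s * klFun c + (1 - s) * klFun ((1 - c * s) / (1 - s)) := by
  rcases eq_or_ne s 0 with rfl | hs
  · simp [binKL]
  · rw [binKL, mul_div_cancel_right₀ c hs]

lemma gammaPlus_eq_binKL {ε s : ℝ} (hs : s ≠ 1) : gammaPlus ε s = binKL s ((1 + ε) * s) := by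
  have hs' : 1 - s ≠ 0 := sub_ne_zero.2 hs.symm
  rw [binKL_mul_self, gammaPlus, klFun_apply, klFun_apply]
  field_simp
  ring

lemma hasDerivAt_binKL_mul_self {c s : ℝ} (hcs : c * s < 1) (hs : s < 1) :
    HasDerivAt (fun s => binKL s (c * s))
      (c * Real.log c - c * Real.log ((1 - c * s) / (1 - s)) + (1 - c * s) / (1 - s) - c) s := by
  have hs' : 0 < 1 - s := by linarith
  have hx : HasDerivAt (fun s => (1 - c * s) / (1 - s))
      ((-c * (1 - s) - (1 - c * s) * (-1)) / (1 - s) ^ 2) s :=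
    (((hasDerivAt_id s).const_mul c).const_sub 1).div ((hasDerivAt_id s).const_sub 1) hs'.ne'
      |>.congr_deriv (by simp)
  have hk := (hasDerivAt_klFun (div_pos (sub_pos.2 hcs) hs').ne').comp s hx
  rw [funext (binKL_mul_self c)]
  refine (((hasDerivAt_id s).mul_const (klFun c)).add
    (((hasDerivAt_id s).const_sub 1).mul hk)).congr_deriv ?_
  simp only [klFun_apply, id, Function.comp]
  field_simp
  ring

lemma monotoneOn_binKL_mul_self {c : ℝ} (hc : 1 < c) :
    MonotoneOn (fun s => binKL s (c * s)) (Icc 0 c⁻¹) := by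
  have hc₀ : 0 < c := by linarith
  have hc₁ : c⁻¹ < 1 := inv_lt_one_of_one_lt₀ hc
  have key : ∀ s ∈ interior (Icc 0 c⁻¹), c * s < 1 ∧ s < 1 := by
    intro s hs
    rw [interior_Icc] at hs
    refine ⟨?_, hs.2.trans hc₁⟩
    simpa [hc₀.ne'] using mul_lt_mul_of_pos_left hs.2 hc₀
  refine monotoneOn_of_deriv_nonneg (convex_Icc _ _) ?_ ?_ ?_
  · rw [funext (binKL_mul_self c)]
    have : ∀ s ∈ Icc 0 c⁻¹, 1 - s ≠ 0 := fun s hs => by linarith [hs.2]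
    fun_prop (disch := assumption)
  · exact fun s hs => (hasDerivAt_binKL_mul_self (key s hs).1 (key s hs).2).differentiableAt
      |>.differentiableWithinAt
  · intro s hs
    obtain ⟨hcs, hs₁⟩ := key s hs
    rw [(hasDerivAt_binKL_mul_self hcs hs₁).deriv]
    -- the derivative is `c * (y - 1 - log y)` with `y = x / c`
    set x := (1 - c * s) / (1 - s)
    have hx : 0 < x := div_pos (by linarith) (by linarith)
    have := Real.log_le_sub_one_of_pos (div_pos hx hc₀)
    rw [Real.log_div hx.ne' hc₀.ne', le_sub_iff_add_le, ← mul_le_mul_iff_of_pos_left hc₀] at this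
    field_simp at this
    linarith

lemma gammaPlus_le_binKL {ε δ s t : ℝ} (hε : 0 < ε) (hδ : 0 < δ) (hδs : δ ≤ s)
    (hst : (1 + ε) * s ≤ t) (ht : t ≤ 1) : gammaPlus ε δ ≤ binKL s t := by
  have hc : 1 < 1 + ε := by linarith
  have hs : 0 < s := hδ.trans_le hδs
  have hsc : s ≤ (1 + ε)⁻¹ := by
    rw [← mul_one (1 + ε)⁻¹, le_inv_mul_iff₀ (by positivity)]; linarith
  have hs₁ : s < 1 := hsc.trans_lt (inv_lt_one_of_one_lt₀ hc)
  have hss : s ≤ (1 + ε) * s := by nlinarith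
  calc gammaPlus ε δ = binKL δ ((1 + ε) * δ) := gammaPlus_eq_binKL (by linarith)
    _ ≤ binKL s ((1 + ε) * s) :=
      monotoneOn_binKL_mul_self hc ⟨hδ.le, hδs.trans hsc⟩ ⟨hs.le, hsc⟩ hδs
    _ ≤ binKL s t := monotoneOn_binKL hs hs₁ ⟨hss, hst.trans ht⟩ ⟨hss.trans hst, ht⟩ hst

section Measure

variable {α : Type*} [MeasurableSpace α]

lemma ConvexOn.measureReal_mul_le_setIntegral {μ : Measure α} [IsFiniteMeasure μ] {S : Set ℝ}
    {g : ℝ → ℝ} (hg : ConvexOn ℝ S g) (hgc : ContinuousOn g S) (hS : IsClosed S) {f : α → ℝ}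
    (hfS : ∀ᵐ x ∂μ, f x ∈ S) (hf : Integrable f μ) (hgf : Integrable (g ∘ f) μ) (t : Set α) :
    μ.real t * g ((∫ x in t, f x ∂μ) / μ.real t) ≤ ∫ x in t, g (f x) ∂μ := by
  by_cases ht : μ t = 0
  · simp [Measure.restrict_eq_zero.2 ht, measureReal_def, ht]
  have hpos : 0 < μ.real t := ENNReal.toReal_pos ht (measure_ne_top μ t)
  have := hg.map_set_average_le hgc hS ht (measure_ne_top μ t) (ae_restrict_of_ae hfS)
    hf.integrableOn hgf.integrableOn
  rw [setAverage_eq, setAverage_eq, smul_eq_mul, smul_eq_mul, inv_mul_eq_div,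
    le_inv_mul_iff₀ hpos] at this
  exact this

lemma ofReal_binKL_le_klDiv {μ ν : Measure α} [IsProbabilityMeasure μ] [IsProbabilityMeasure ν]
    {C : Set α} (hC : MeasurableSet C) :
    ENNReal.ofReal (binKL (ν.real C) (μ.real C)) ≤ klDiv μ ν := by
  by_cases hμν : μ ≪ ν
  swap; · simp [hμν]
  by_cases h_int : Integrable (llr μ ν) μ
  swap; · simp [klDiv_of_not_integrable h_int]
  rw [← ENNReal.ofReal_toReal (klDiv_ne_top hμν h_int), toReal_klDiv_eq_integral_klFun hμν]
  refine ENNReal.ofReal_le_ofReal ?_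
  have hkl_int := (integrable_klFun_rnDeriv_iff hμν).2 h_int
  have jensen := convexOn_klFun.measureReal_mul_le_setIntegral continuous_klFun.continuousOn
    isClosed_Ici (ae_of_all _ fun x => ENNReal.toReal_nonneg) Measure.integrable_toReal_rnDeriv
    hkl_int
  have hCc := jensen Cᶜ
  rw [Measure.setIntegral_toReal_rnDeriv hμν, probReal_compl_eq_one_sub hC,
    probReal_compl_eq_one_sub hC] at hCc
  rw [← integral_add_compl hC hkl_int, binKL]
  refine add_le_add ?_ hCc
  simpa only [Measure.setIntegral_toReal_rnDeriv hμν] using jensen C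

lemma lintegral_piecewise_ofReal {ν : Measure α} [IsProbabilityMeasure ν] {C : Set α}
    (hC : MeasurableSet C) {a b : ℝ} (ha : 0 ≤ a) (hb : 0 ≤ b) :
    ∫⁻ x, C.piecewise (fun _ => ENNReal.ofReal a) (fun _ => ENNReal.ofReal b) x ∂ν
      = ENNReal.ofReal (a * ν.real C + b * (1 - ν.real C)) := by
  rw [lintegral_piecewise hC, setLIntegral_const, setLIntegral_const,
    ← ofReal_measureReal (μ := ν) (s := C), ← ofReal_measureReal (μ := ν) (s := Cᶜ),
    probReal_compl_eq_one_sub hC, ← ENNReal.ofReal_mul ha, ← ENNReal.ofReal_mul hb,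
    ENNReal.ofReal_add (by positivity) (mul_nonneg hb (by simp))]

lemma exists_klDiv_eq_binKL {ν : Measure α} [IsProbabilityMeasure ν] {C : Set α}
    (hC : MeasurableSet C) (hC₀ : 0 < ν.real C) (hC₁ : ν.real C < 1) {t : ℝ} (ht₀ : 0 ≤ t)
    (ht₁ : t ≤ 1) :
    ∃ μ : Measure α, IsProbabilityMeasure μ ∧ μ ≪ ν ∧
      (∀ᵐ x ∂ν, x ∈ C → (μ.rnDeriv ν x).toReal = t / ν.real C) ∧
      klDiv μ ν = ENNReal.ofReal (binKL (ν.real C) t) := by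
  set s := ν.real C with hs
  have ha : 0 ≤ t / s := by positivity
  have hb : 0 ≤ (1 - t) / (1 - s) := div_nonneg (by linarith) (by linarith)
  set g := C.piecewise (fun _ => ENNReal.ofReal (t / s))
    (fun _ => ENNReal.ofReal ((1 - t) / (1 - s)))
  have hg : Measurable g := Measurable.piecewise hC measurable_const measurable_const
  have hrn : (ν.withDensity g).rnDeriv ν =ᵐ[ν] g := Measure.rnDeriv_withDensity ν hg
  have : IsProbabilityMeasure (ν.withDensity g) := by
    constructor
    rw [withDensity_apply _ MeasurableSet.univ, Measure.restrict_univ,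
      lintegral_piecewise_ofReal hC ha hb, ← hs, div_mul_cancel₀ t hC₀.ne',
      div_mul_cancel₀ _ (by linarith : (1 : ℝ) - s ≠ 0), add_sub_cancel, ENNReal.ofReal_one]
  refine ⟨ν.withDensity g, this, withDensity_absolutelyContinuous ν g, ?_, ?_⟩
  · filter_upwards [hrn] with x hx hxC
    rw [hx, show g x = _ from Set.piecewise_eq_of_mem _ _ _ hxC, ENNReal.toReal_ofReal ha]
  · rw [klDiv_eq_lintegral_klFun_of_ac (withDensity_absolutelyContinuous ν g)]
    have hkl : (fun x => ENNReal.ofReal (klFun (g x).toReal)) =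
        C.piecewise (fun _ => ENNReal.ofReal (klFun (t / s)))
          (fun _ => ENNReal.ofReal (klFun ((1 - t) / (1 - s)))) := by
      ext x
      by_cases hx : x ∈ C <;> simp [g, hx, ha, hb]
    rw [lintegral_congr_ae (hrn.mono fun x hx => by rw [hx]), hkl,
      lintegral_piecewise_ofReal hC (klFun_nonneg ha) (klFun_nonneg hb), binKL, ← hs]
    ring_nf

lemma KL_eq_klDiv (μ ν : Measure α) [IsProbabilityMeasure μ] [IsProbabilityMeasure ν] :
    KL μ ν = klDiv μ ν := by
  rw [KL]
  split_ifs with h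
  · rw [klDiv_of_ac_of_integrable h.1 h.2, probReal_univ, probReal_univ, add_sub_cancel_right]
    rfl
  · rcases not_and_or.1 h with h | h
    · rw [klDiv_of_not_ac h]
    · rw [klDiv_of_not_integrable h]

lemma mul_measureReal_le_of_le_rnDeriv {μ ν : Measure α} [IsFiniteMeasure μ] [IsFiniteMeasure ν]
    (hμν : μ ≪ ν) {C : Set α} (hC : MeasurableSet C) {c : ℝ}
    (h : ∀ᵐ x ∂ν, x ∈ C → c ≤ (μ.rnDeriv ν x).toReal) : c * ν.real C ≤ μ.real C := by
  rw [← Measure.setIntegral_toReal_rnDeriv hμν C, mul_comm, ← smul_eq_mul, ← setIntegral_const]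
  exact setIntegral_mono_on_ae (integrableOn_const (measure_ne_top ν C))
    Measure.integrable_toReal_rnDeriv.integrableOn hC h

end Measure

lemma zeroVar_apply_of_subset {X : Type*} [MeasurableSpace X] (F : Measure X) {A S : Set X}
    (hS : MeasurableSet S) (hSA : S ⊆ A) : zeroVar F A S = F S / F A := by
  rw [zeroVar, withDensity_apply _ hS,
    setLIntegral_congr_fun hS fun x hx => Set.indicator_of_mem (hSA hx) _, setLIntegral_const,
    ENNReal.div_eq_inv_mul]

lemma isProbabilityMeasure_zeroVar {X : Type*} [MeasurableSpace X] {F : Measure X} {A : Set X}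
    (hA : MeasurableSet A) (h₀ : F A ≠ 0) (h_top : F A ≠ ∞) :
    IsProbabilityMeasure (zeroVar F A) := by
  constructor
  rw [zeroVar, withDensity_apply _ MeasurableSet.univ, Measure.restrict_univ,
    lintegral_indicator hA, setLIntegral_const, ENNReal.inv_mul_cancel h₀ h_top]

theorem stmt15_general {X : Type*} [MeasurableSpace X]
    (F : Measure X) [IsProbabilityMeasure F]
    (A : Set X) (hA : MeasurableSet A) (hp : 0 < F A)
    (δ' ε : ℝ) (hδ' : δ' ∈ Set.Ioo (0 : ℝ) 1) (hε : 0 < ε) (hεδ : (1 + ε) * δ' < 1)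
    (hC : ∃ C, C ⊆ A ∧ MeasurableSet C ∧ F C = ENNReal.ofReal δ' * F A) :
    sInf { r : ℝ≥0∞ | ∃ G : Measure X, IsProbabilityMeasure G ∧
        (∃ C', C' ⊆ A ∧ MeasurableSet C' ∧ ENNReal.ofReal δ' * F A ≤ F C' ∧
          ∀ᵐ x ∂(zeroVar F A), x ∈ C' → 1 + ε ≤ ((G.rnDeriv (zeroVar F A)) x).toReal) ∧
        r = KL G (zeroVar F A) }
      = ENNReal.ofReal (gammaPlus ε δ') := by
  obtain ⟨hδ₀, hδ₁⟩ := hδ'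
  obtain ⟨C, hCA, hC, hFC⟩ := hC
  have hFA : F A ≠ ∞ := measure_ne_top F A
  have := isProbabilityMeasure_zeroVar hA hp.ne' hFA
  have hνC : (zeroVar F A).real C = δ' := by
    rw [measureReal_def, zeroVar_apply_of_subset F hC hCA, hFC,
      ENNReal.mul_div_cancel_right hp.ne' hFA, ENNReal.toReal_ofReal hδ₀.le]
  refine le_antisymm ?_ (le_sInf ?_)
  · obtain ⟨G, hG, -, hGC, hKL⟩ := exists_klDiv_eq_binKL hC (hνC ▸ hδ₀) (hνC ▸ hδ₁)
      (by positivity : 0 ≤ (1 + ε) * δ') hεδ.le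
    refine sInf_le ⟨G, hG, ⟨C, hCA, hC, hFC.ge, ?_⟩, ?_⟩
    · filter_upwards [hGC] with x hx hxC
      rw [hx hxC, hνC, mul_div_cancel_right₀ _ hδ₀.ne']
    · rw [KL_eq_klDiv, hKL, hνC, gammaPlus_eq_binKL (by linarith)]
  · rintro _ ⟨G, hG, ⟨C', hC'A, hC', hFC', hGC'⟩, rfl⟩
    rw [KL_eq_klDiv]
    by_cases hGν : G ≪ zeroVar F A
    swap; · simp [hGν]
    have hνC' : δ' ≤ (zeroVar F A).real C' := by
      rw [measureReal_def, ← ENNReal.ofReal_le_iff_le_toReal (measure_ne_top _ _),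
        zeroVar_apply_of_subset F hC' hC'A, ENNReal.le_div_iff_mul_le (.inl hp.ne') (.inl hFA)]
      exact hFC'
    exact (ENNReal.ofReal_le_ofReal (gammaPlus_le_binKL hε hδ₀ hνC'
      (mul_measureReal_le_of_le_rnDeriv hGν hC' hGC') measureReal_le_one)).trans
      (ofReal_binKL_le_klDiv hC')

theorem stmt15 {X : Type*} [MeasurableSpace X] [MetricSpace X] [CompleteSpace X]
    [TopologicalSpace.SeparableSpace X] [BorelSpace X]
    (F : Measure X) [IsProbabilityMeasure F]
    (A : Set X) (hA : MeasurableSet A) (hp : 0 < F A)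
    (δ' ε : ℝ) (hδ' : δ' ∈ Set.Ioo (0 : ℝ) 1) (hε : 0 < ε) (hεδ : (1 + ε) * δ' < 1)
    (hC : ∃ C, C ⊆ A ∧ MeasurableSet C ∧ F C = ENNReal.ofReal δ' * F A) :
    sInf { r : ℝ≥0∞ | ∃ G : Measure X, IsProbabilityMeasure G ∧
        (∃ C', C' ⊆ A ∧ MeasurableSet C' ∧ ENNReal.ofReal δ' * F A ≤ F C' ∧
          ∀ᵐ x ∂(zeroVar F A), x ∈ C' → 1 + ε ≤ ((G.rnDeriv (zeroVar F A)) x).toReal) ∧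
        r = KL G (zeroVar F A) }
      = ENNReal.ofReal (gammaPlus ε δ') :=
  stmt15_general F A hA hp δ' ε hδ' hε hεδ hC
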